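/- Let Φ be the standard normal cumulative distribution function and b_n = √(2 ln(n ∨ 2)). For every q with 0 < q < 1 there exist a constant c > 0 and N such that for all n ≥ N, Φ(q·b_n)^n ≤ exp(−c·n^{1−q²}/(q·b_n)); in particular, ∑_{n≥1} Φ(q·b_n)^n < ∞ for every 0 < q < 1. -/

import Mathlib

open MeasureTheory Real Filter

/-- The standard normal density `φ(t) = (2π)^{-1/2} e^{-t²/2}`. -/
noncomputable def stdNormalPDF (t : ℝ) : ℝ :=
  (Real.sqrt (2 * Real.pi))⁻¹ * Real.exp (-t ^ 2 / 2)

/-- The standard normal distribution function `Φ(z) = ∫_{-∞}^z φ(t) dt`. -/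
noncomputable def stdNormalCDF (z : ℝ) : ℝ :=
  ∫ t in Set.Iic z, stdNormalPDF t

/-- `b_n = √(2 ln (n ∨ 2))`. -/
noncomputable def bFun (t : ℝ) : ℝ := Real.sqrt (2 * Real.log (max t 2))

lemma pdf_eq (t : ℝ) : stdNormalPDF t = (Real.sqrt (2 * Real.pi))⁻¹ * Real.exp (-(1/2) * t ^ 2) := by
  rw [stdNormalPDF]; ring_nf

lemma pdf_nonneg (t : ℝ) : 0 ≤ stdNormalPDF t := by
  unfold stdNormalPDF
  positivity

lemma pdf_integrable : Integrable stdNormalPDF := by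
  have := (integrable_exp_neg_mul_sq (by norm_num : (0:ℝ) < 1/2)).const_mul (Real.sqrt (2 * Real.pi))⁻¹
  refine this.congr ?_
  filter_upwards with t
  rw [pdf_eq]

lemma integral_pdf : ∫ t, stdNormalPDF t = 1 := by
  have h := integral_gaussian (1/2 : ℝ)
  have : ∫ t, stdNormalPDF t = (Real.sqrt (2 * Real.pi))⁻¹ * ∫ t : ℝ, Real.exp (-(1/2) * t ^ 2) := by
    rw [← integral_const_mul]
    exact integral_congr_ae (by filter_upwards with t; rw [pdf_eq])
  rw [this, h]
  have : (π / (1/2 : ℝ)) = 2 * π := by ring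
  rw [this]
  rw [inv_mul_cancel₀]
  positivity

lemma cdf_nonneg (z : ℝ) : 0 ≤ stdNormalCDF z :=
  setIntegral_nonneg measurableSet_Iic fun t _ => pdf_nonneg t

lemma one_sub_cdf (z : ℝ) : 1 - stdNormalCDF z = ∫ t in Set.Ioi z, stdNormalPDF t := by
  have h := intervalIntegral.integral_Iic_add_Ioi (b := z) pdf_integrable.integrableOn pdf_integrable.integrableOn
  rw [integral_pdf] at h
  unfold stdNormalCDF
  linarith

lemma cdf_le_one (z : ℝ) : stdNormalCDF z ≤ 1 := by
  have := one_sub_cdf z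
  have h2 : 0 ≤ ∫ t in Set.Ioi z, stdNormalPDF t :=
    setIntegral_nonneg measurableSet_Ioi fun t _ => pdf_nonneg t
  linarith

lemma pdf_anti {a b : ℝ} (ha : 0 ≤ a) (hab : a ≤ b) : stdNormalPDF b ≤ stdNormalPDF a := by
  unfold stdNormalPDF
  have : -b ^ 2 / 2 ≤ -a ^ 2 / 2 := by nlinarith
  have h := Real.exp_le_exp.mpr this
  have h0 : (0:ℝ) ≤ (Real.sqrt (2 * Real.pi))⁻¹ := by positivity
  exact mul_le_mul_of_nonneg_left h h0

lemma tail_lb {z : ℝ} (hz : 1 ≤ z) :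
    stdNormalPDF (z + 1/z) / z ≤ 1 - stdNormalCDF z := by
  have hz0 : 0 < z := lt_of_lt_of_le one_pos hz
  rw [one_sub_cdf]
  have h1 : ∫ t in Set.Ioc z (z + 1/z), stdNormalPDF t ≤ ∫ t in Set.Ioi z, stdNormalPDF t := by
    apply setIntegral_mono_set pdf_integrable.integrableOn
    · filter_upwards with t using pdf_nonneg t
    · filter_upwards with t using fun ht => ht.1
  refine le_trans ?_ h1
  have hle : z ≤ z + 1/z := le_add_of_nonneg_right (by positivity)
  rw [← intervalIntegral.integral_of_le hle]
  have h2 : ∫ t in z..(z + 1/z), stdNormalPDF (z + 1/z) ≤ ∫ t in z..(z + 1/z), stdNormalPDF t := by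
    apply intervalIntegral.integral_mono_on hle (intervalIntegrable_const)
      pdf_integrable.intervalIntegrable
    intro x hx
    exact pdf_anti (le_trans hz0.le hx.1) hx.2
  refine le_trans ?_ h2
  rw [intervalIntegral.integral_const, smul_eq_mul]
  have : z + 1/z - z = 1/z := by ring
  rw [this, div_eq_mul_inv, mul_comm, one_div]

lemma cdf_pow_le {z : ℝ} (hz : 1 ≤ z) (n : ℕ) :
    stdNormalCDF z ^ n ≤ Real.exp (-((n : ℝ) * (stdNormalPDF (z + 1/z) / z))) := by
  set d := stdNormalPDF (z + 1/z) / z with hd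
  have hcl : stdNormalCDF z ≤ 1 - d := by have := tail_lb hz; linarith
  have h1 : 1 - d ≤ Real.exp (-d) := by
    have := Real.add_one_le_exp (-d)
    linarith
  calc stdNormalCDF z ^ n ≤ Real.exp (-d) ^ n :=
        pow_le_pow_left₀ (cdf_nonneg z) (le_trans hcl h1) n
    _ = Real.exp (-((n : ℝ) * d)) := by
        rw [← Real.exp_nat_mul]; ring_nf

lemma key (q : ℝ) (hq0 : 0 < q) (n : ℕ) (hn : 2 ≤ n) (hz : 1 ≤ q * bFun n) :
    Real.exp (-(3/2)) * (Real.sqrt (2*Real.pi))⁻¹ * (n:ℝ)^(1-q^2) ≤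
      (n:ℝ) * stdNormalPDF (q*bFun n + 1/(q*bFun n)) := by
  set z := q * bFun n with hzdef
  have hn2 : (2:ℝ) ≤ (n:ℝ) := by exact_mod_cast hn
  have hn0 : (0:ℝ) < n := by linarith
  have hb : bFun n = Real.sqrt (2 * Real.log n) := by
    unfold bFun; rw [max_eq_left hn2]
  have hlogpos : 0 ≤ Real.log n := Real.log_nonneg (by linarith)
  have hz0 : 0 < z := lt_of_lt_of_le one_pos hz
  have hzsq : z^2 = q^2 * (2 * Real.log n) := by
    rw [hzdef, hb, mul_pow, Real.sq_sqrt (by positivity)]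
  have hinv : 1/z ≤ 1 := by rw [div_le_one hz0]; exact hz
  have hinv0 : 0 ≤ 1/z := by positivity
  have hsq : (z + 1/z)^2 ≤ z^2 + 3 := by
    have h2 : z * (1/z) = 1 := mul_one_div_cancel hz0.ne'
    nlinarith [sq_nonneg (1/z)]
  have hexp : Real.exp (-(3/2)) * Real.exp (-(z^2/2)) ≤ Real.exp (-(z + 1/z)^2 / 2) := by
    rw [← Real.exp_add]
    apply Real.exp_le_exp.mpr
    linarith
  have hrp : (n:ℝ)^(1-q^2) = (n:ℝ) * Real.exp (-(z^2/2)) := by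
    have h1 : Real.exp (-(z^2/2)) = (n:ℝ) ^ (-(q^2)) := by
      rw [Real.rpow_def_of_pos hn0, hzsq]; congr 1; ring
    rw [h1, show (1 - q^2) = 1 + (-(q^2)) by ring, Real.rpow_add hn0, Real.rpow_one]
  rw [hrp]
  unfold stdNormalPDF
  set C := (Real.sqrt (2*Real.pi))⁻¹ with hC
  have hC0 : 0 ≤ C := by positivity
  calc Real.exp (-(3/2)) * C * ((n:ℝ) * Real.exp (-(z^2/2)))
      = (n:ℝ) * C * (Real.exp (-(3/2)) * Real.exp (-(z^2/2))) := by ring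
    _ ≤ (n:ℝ) * C * Real.exp (-(z + 1/z)^2 / 2) :=
        mul_le_mul_of_nonneg_left hexp (by positivity)
    _ = (n:ℝ) * (C * Real.exp (-(z + 1/z)^2 / 2)) := by ring

lemma one_le_q_bFun (q : ℝ) (hq0 : 0 < q) (n : ℕ) (hn : 2 ≤ n)
    (hne : Real.exp (1/(2*q^2)) ≤ (n:ℝ)) : 1 ≤ q * bFun n := by
  have hn2 : (2:ℝ) ≤ (n:ℝ) := by exact_mod_cast hn
  have hb : bFun n = Real.sqrt (2 * Real.log n) := by
    unfold bFun; rw [max_eq_left hn2]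
  have hlog : 1/(2*q^2) ≤ Real.log n := by
    have := Real.log_le_log (Real.exp_pos _) hne
    rwa [Real.log_exp] at this
  have h2 : (1/q)^2 ≤ 2 * Real.log n := by
    rw [div_pow, one_pow]
    rw [div_le_iff₀ (by positivity)] at hlog ⊢
    nlinarith
  have h3 : 1/q ≤ bFun n := by
    rw [hb]
    calc 1/q = Real.sqrt ((1/q)^2) := (Real.sqrt_sq (by positivity)).symm
      _ ≤ Real.sqrt (2 * Real.log n) := Real.sqrt_le_sqrt h2
  calc (1:ℝ) = q * (1/q) := by field_simp
    _ ≤ q * bFun n := mul_le_mul_of_nonneg_left h3 hq0.le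

/-- For `0 < q < 1` one has, for some `c > 0` and all large `n`,
`Φ(q b_n)ⁿ ≤ exp(-c n^{1-q²}/(q b_n))`; in particular `∑_n Φ(q b_n)ⁿ < ∞`. -/
theorem stdNormalCDF_pow_le_and_summable
    (q : ℝ) (hq0 : 0 < q) (hq1 : q < 1) :
    (∃ c > (0 : ℝ), ∃ N : ℕ, ∀ n ≥ N,
      (stdNormalCDF (q * bFun n)) ^ n ≤
        Real.exp (-(c * (n : ℝ) ^ (1 - q ^ 2) / (q * bFun n)))) ∧
    Summable (fun n : ℕ => (stdNormalCDF (q * bFun n)) ^ n) := by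
  set c := Real.exp (-(3/2)) * (Real.sqrt (2*Real.pi))⁻¹ with hcdef
  have hc0 : 0 < c := by positivity
  set N := max 2 ⌈Real.exp (1/(2*q^2))⌉₊ with hNdef
  have hmain : ∀ n ≥ N, (stdNormalCDF (q * bFun n)) ^ n ≤
      Real.exp (-(c * (n : ℝ) ^ (1 - q ^ 2) / (q * bFun n))) := by
    intro n hn
    have hn2 : 2 ≤ n := le_trans (le_max_left _ _) hn
    have hne : Real.exp (1/(2*q^2)) ≤ (n:ℝ) := by
      have h1 : ⌈Real.exp (1/(2*q^2))⌉₊ ≤ n := le_trans (le_max_right _ _) hn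
      calc Real.exp (1/(2*q^2)) ≤ (⌈Real.exp (1/(2*q^2))⌉₊ : ℝ) := Nat.le_ceil _
        _ ≤ (n:ℝ) := by exact_mod_cast h1
    have hz : 1 ≤ q * bFun n := one_le_q_bFun q hq0 n hn2 hne
    have hz0 : 0 < q * bFun n := lt_of_lt_of_le one_pos hz
    refine le_trans (cdf_pow_le hz n) ?_
    apply Real.exp_le_exp.mpr
    apply neg_le_neg
    rw [mul_div_assoc' (n:ℝ)]
    rw [div_le_div_iff₀ hz0 hz0]
    have hkey := key q hq0 n hn2 hz
    rw [← hcdef] at hkey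
    exact mul_le_mul_of_nonneg_right hkey hz0.le
  refine ⟨⟨c, hc0, N, hmain⟩, ?_⟩
  -- summability
  have hs : 0 < 1 - q^2 := by nlinarith
  set s := 1 - q^2 with hsdef
  have hA : Tendsto (fun n : ℕ => (n:ℝ)^(s/4)) atTop atTop :=
    (tendsto_rpow_atTop (by positivity)).comp tendsto_natCast_atTop_atTop
  have hA2 : Tendsto (fun n : ℕ => (n:ℝ)^(s/2)) atTop atTop :=
    (tendsto_rpow_atTop (by positivity)).comp tendsto_natCast_atTop_atTop
  have hEv : ∀ᶠ n : ℕ in atTop,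
      (stdNormalCDF (q * bFun n)) ^ n ≤ (n:ℝ) ^ (-2 : ℝ) := by
    filter_upwards [hA.eventually_ge_atTop (8/s), hA2.eventually_ge_atTop ((8/s)*q/c),
      eventually_ge_atTop N] with n h1 h2 hnN
    have hn2 : 2 ≤ n := le_trans (le_max_left _ _) hnN
    have hn2' : (2:ℝ) ≤ (n:ℝ) := by exact_mod_cast hn2
    have hn0 : (0:ℝ) < n := by linarith
    have hb : bFun n = Real.sqrt (2 * Real.log n) := by
      unfold bFun; rw [max_eq_left hn2']
    have hlogpos : 0 ≤ Real.log n := Real.log_nonneg (by linarith)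
    have hne : Real.exp (1/(2*q^2)) ≤ (n:ℝ) := by
      have h1' : ⌈Real.exp (1/(2*q^2))⌉₊ ≤ n := le_trans (le_max_right _ _) hnN
      calc Real.exp (1/(2*q^2)) ≤ (⌈Real.exp (1/(2*q^2))⌉₊ : ℝ) := Nat.le_ceil _
        _ ≤ (n:ℝ) := by exact_mod_cast h1'
    have hz : 1 ≤ q * bFun n := one_le_q_bFun q hq0 n hn2 hne
    have hz0 : 0 < q * bFun n := lt_of_lt_of_le one_pos hz
    -- log bound
    have hlog : 2 * Real.log n ≤ (8/s) * (n:ℝ)^(s/4) := by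
      have := Real.log_le_rpow_div (le_of_lt hn0) (show (0:ℝ) < s/4 by positivity)
      rw [div_div_eq_mul_div] at this
      calc 2 * Real.log n ≤ 2 * ((n:ℝ)^(s/4) * 4 / s) := by linarith
        _ = (8/s) * (n:ℝ)^(s/4) := by ring
    have hrpnn : (0:ℝ) ≤ (n:ℝ)^(s/4) := Real.rpow_nonneg (le_of_lt hn0) _
    -- bFun ≤ n^{s/4}
    have hble : bFun n ≤ (n:ℝ)^(s/4) := by
      rw [hb]
      have h4 : 2 * Real.log n ≤ ((n:ℝ)^(s/4))^2 := by
        have : (8/s) * (n:ℝ)^(s/4) ≤ (n:ℝ)^(s/4) * (n:ℝ)^(s/4) :=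
          mul_le_mul_of_nonneg_right h1 hrpnn
        nlinarith
      calc Real.sqrt (2 * Real.log n) ≤ Real.sqrt (((n:ℝ)^(s/4))^2) := Real.sqrt_le_sqrt h4
        _ = (n:ℝ)^(s/4) := Real.sqrt_sq hrpnn
    -- 2 log n ≤ c n^s / (q bFun n)
    have hcore : 2 * Real.log n ≤ c * (n:ℝ)^s / (q * bFun n) := by
      have hstep1 : c * (n:ℝ)^s / (q * (n:ℝ)^(s/4)) ≤ c * (n:ℝ)^s / (q * bFun n) := by
        apply div_le_div_of_nonneg_left (by positivity) hz0
        exact mul_le_mul_of_nonneg_left hble hq0.le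
      refine le_trans ?_ hstep1
      have hsplit : (n:ℝ)^s = (n:ℝ)^(s/2) * (n:ℝ)^(s/4) * (n:ℝ)^(s/4) := by
        rw [← Real.rpow_add hn0, ← Real.rpow_add hn0]; congr 1; ring
      rw [hsplit]
      have hrp4pos : (0:ℝ) < (n:ℝ)^(s/4) := Real.rpow_pos_of_pos hn0 _
      rw [le_div_iff₀ (by positivity)]
      -- goal: 2 log n * (q * n^{s/4}) ≤ c * (n^{s/2} * n^{s/4} * n^{s/4})
      have hc1 : (8/s)*q ≤ c * (n:ℝ)^(s/2) := by
        have := mul_le_mul_of_nonneg_left h2 hc0.le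
        calc (8/s)*q = c * ((8/s)*q/c) := by field_simp
          _ ≤ c * (n:ℝ)^(s/2) := mul_le_mul_of_nonneg_left h2 hc0.le
      calc 2 * Real.log n * (q * (n:ℝ)^(s/4))
          ≤ (8/s) * (n:ℝ)^(s/4) * (q * (n:ℝ)^(s/4)) := by
            apply mul_le_mul_of_nonneg_right hlog (by positivity)
        _ = ((8/s)*q) * ((n:ℝ)^(s/4) * (n:ℝ)^(s/4)) := by ring
        _ ≤ (c * (n:ℝ)^(s/2)) * ((n:ℝ)^(s/4) * (n:ℝ)^(s/4)) :=
            mul_le_mul_of_nonneg_right hc1 (by positivity)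
        _ = c * ((n:ℝ)^(s/2) * (n:ℝ)^(s/4) * (n:ℝ)^(s/4)) := by ring
    refine le_trans (hmain n hnN) ?_
    have hfin : Real.exp (-(c * (n : ℝ) ^ s / (q * bFun n))) ≤ Real.exp (-(2 * Real.log n)) := by
      apply Real.exp_le_exp.mpr; linarith
    refine le_trans hfin ?_
    rw [Real.rpow_def_of_pos hn0]
    apply le_of_eq; congr 1; ring
  obtain ⟨M, hM⟩ := eventually_atTop.mp hEv
  rw [← summable_nat_add_iff M]
  apply Summable.of_nonneg_of_le (fun n => pow_nonneg (cdf_nonneg _) _)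
    (fun n => hM (n + M) (by omega))
  exact (summable_nat_add_iff M).mpr (Real.summable_nat_rpow.mpr (by norm_num))
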